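/- arXiv:1109.3107 — 5 statements merged into one kernel-verified Lean document; each statement's English description precedes it below -/
import Mathlib

section
/- Neither the set P = {n ∈ ℕ : λ(n) = +1} nor the set N = {n ∈ ℕ : λ(n) = -1} contains an infinite arithmetic progression, where λ is the Liouville function. -/
/-!
If `m ≠ 0` is a term of the progression and `p ≡ 1 (mod l)` is a prime (which exists by the
infinitude of such primes), then `m * p` is again a term, and `λ(m p) = -λ(m)`.
-/

/-- The Liouville function `λ(n) = (-1)^Ω(n)`. -/
def liouville (n : ℕ) : ℤ := (-1) ^ (ArithmeticFunction.cardFactors n)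

lemma liouville_mul_prime {m p : ℕ} (hm : m ≠ 0) (hp : p.Prime) :
    liouville (m * p) = -liouville m := by
  rw [liouville, liouville, ArithmeticFunction.cardFactors_mul hm hp.ne_zero,
    ArithmeticFunction.cardFactors_apply_prime hp, pow_succ, mul_neg_one]

lemma exists_liouville_eq_neg_of_arithmetic_progression (n₀ : ℕ) {l : ℕ} (hl : 0 < l) :
    ∃ k k' : ℕ, liouville (n₀ + l * k') = -liouville (n₀ + l * k) := by
  obtain ⟨p, hp, -, hmod⟩ := Nat.exists_prime_gt_modEq_one (k := l) 1 hl.ne'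
  obtain ⟨t, ht⟩ : l ∣ p - 1 := (Nat.modEq_iff_dvd' hp.one_le).mp hmod.symm
  have hpt : p = 1 + l * t := by have := hp.one_le; omega
  refine ⟨1, 1 + (n₀ + l * 1) * t, ?_⟩
  have hterm : n₀ + l * (1 + (n₀ + l * 1) * t) = (n₀ + l * 1) * p := by rw [hpt]; ring
  rw [hterm, liouville_mul_prime (by omega) hp]

theorem no_infinite_AP_of_constant_liouville_sign_general (n₀ l : ℕ) (hl : 0 < l) :
    (¬ ∀ k : ℕ, liouville (n₀ + l * k) = 1) ∧ (¬ ∀ k : ℕ, liouville (n₀ + l * k) = -1) := by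
  obtain ⟨k, k', hneg⟩ := exists_liouville_eq_neg_of_arithmetic_progression n₀ hl
  constructor <;> intro hconst <;> rw [hconst k, hconst k'] at hneg <;> norm_num at hneg

/-- Neither `P = {n : λ(n) = 1}` nor `N = {n : λ(n) = -1}` contains an infinite
arithmetic progression `{n₀ + l·k : k ≥ 0}` with `n₀ ≥ 1`, `l ≥ 1`. -/
theorem no_infinite_AP_of_constant_liouville_sign (n₀ l : ℕ) (hn₀ : 0 < n₀) (hl : 0 < l) :
    (¬ ∀ k : ℕ, liouville (n₀ + l * k) = 1) ∧ (¬ ∀ k : ℕ, liouville (n₀ + l * k) = -1) :=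
  no_infinite_AP_of_constant_liouville_sign_general n₀ l hl
end

section
/- For every a ≥ 1 and b, the sequence λ(a·n + b) changes sign infinitely often in n; that is, there are infinitely many n with λ(a·n+b) = 1 and infinitely many n with λ(a·n+b) = -1. -/
lemma liouville_eq_one_or (n : ℕ) : liouville n = 1 ∨ liouville n = -1 :=
  neg_one_pow_eq_or ℤ _

lemma liouville_mul {m n : ℕ} (hm : m ≠ 0) (hn : n ≠ 0) :
    liouville (m * n) = liouville m * liouville n := by
  simp only [liouville, ArithmeticFunction.cardFactors_mul hm hn, pow_add]

lemma liouville_prime_pow {p : ℕ} (hp : p.Prime) (k : ℕ) : liouville (p ^ k) = (-1) ^ k := by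
  rw [liouville, ArithmeticFunction.cardFactors_apply_prime_pow hp]

lemma exists_mul_add_eq_mul_pow {a p : ℕ} (hp : p ≡ 1 [MOD a]) (hp0 : 0 < p) (b k : ℕ) :
    ∃ n, a * n + b = b * p ^ k := by
  obtain ⟨m, hm⟩ : a ∣ p ^ k - 1 :=
    (Nat.modEq_iff_dvd' (Nat.one_le_pow _ _ hp0)).mp (by simpa using (hp.pow k).symm)
  refine ⟨b * m, ?_⟩
  have hpk : p ^ k = a * m + 1 := by have := Nat.one_le_pow k p hp0; omega
  rw [hpk]
  ring

lemma infinite_setOf_liouville_mul_add_eq {a b : ℕ} (ha : 0 < a) (hb : 0 < b) (c : ℕ) :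
    {n : ℕ | liouville (a * n + b) = liouville b * (-1) ^ c}.Infinite := by
  obtain ⟨p, hp, hp1, hpa⟩ := Nat.exists_prime_gt_modEq_one 1 ha.ne'
  choose f hf using fun k ↦ exists_mul_add_eq_mul_pow hpa hp.pos b (2 * k + c)
  refine Set.infinite_of_injective_forall_mem (f := f) (fun k₁ k₂ hk ↦ ?_) (fun k ↦ ?_)
  · have h := hf k₁
    rw [hk, hf k₂] at h
    have := Nat.pow_right_injective hp.two_le (Nat.eq_of_mul_eq_mul_left hb h)
    omega
  · change liouville (a * f k + b) = _
    rw [hf k, liouville_mul hb.ne' (pow_ne_zero _ hp.ne_zero), liouville_prime_pow hp,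
      pow_add, pow_mul]
    simp

/-- For positive integers `a, b`, the sequence `λ(a·n + b)` changes sign infinitely often. -/
theorem liouville_linear_changes_sign (a b : ℕ) (ha : 0 < a) (hb : 0 < b) :
    {n : ℕ | liouville (a * n + b) = 1}.Infinite ∧
      {n : ℕ | liouville (a * n + b) = -1}.Infinite := by
  have key := infinite_setOf_liouville_mul_add_eq ha hb
  rcases liouville_eq_one_or b with h | h
  · simpa [h] using And.intro (key 0) (key 1)
  · simpa [h] using And.intro (key 1) (key 0)
end

section
/- Let a, l, D be integers with a, l > 0, and suppose (t₀, m₀) ∈ ℤ² satisfies t₀² = 4·a·l·m₀² + D. If (r, s) ∈ ℤ² satisfies r² - 16·a³·l·s² = 1, then m = r²·m₀ + 16·a³·l·s²·m₀ + 4·a·r·s·t₀ and t = r²·t₀ + 16·a²·l·s·r·m₀ + 16·a³·s²·l·t₀ satisfy t² = 4·a·l·m² + D, and moreover m ≡ m₀ (mod 2a) and t ≡ t₀ (mod 2a). -/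
/-!
With `d = 4al`, the pair `(t, m)` is the element `t + m√d` of norm `D`, and `(r, 2as)` is a unit
`u = r + 2as√d` of norm one. The new pair is `(t₀ + m₀√d) · u²`, so it again has norm `D` by
multiplicativity of the norm. Moreover `u² = (r² + 16a³ls²) + 4ars√d ≡ 1 (mod 2a)` since
`r² = 1 + 16a³ls²`, which gives the congruences.
-/

/-- Brahmagupta's identity, specialised to a factor of norm one. -/
theorem sq_sub_mul_sq_of_norm_eq_one {R : Type*} [CommRing R] {d D t m x y : R}
    (h : t ^ 2 - d * m ^ 2 = D) (hu : x ^ 2 - d * y ^ 2 = 1) :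
    (x * t + d * y * m) ^ 2 - d * (x * m + y * t) ^ 2 = D := by
  linear_combination (x ^ 2 - d * y ^ 2) * h + D * hu

theorem sq_sub_mul_sq_eq_one_sq {R : Type*} [CommRing R] {d x y : R} (hu : x ^ 2 - d * y ^ 2 = 1) :
    (x ^ 2 + d * y ^ 2) ^ 2 - d * (2 * x * y) ^ 2 = 1 := by
  linear_combination (x ^ 2 - d * y ^ 2 + 1) * hu

theorem Int.mul_add_mul_modEq_of_modEq_one {n x y : ℤ} (hx : x ≡ 1 [ZMOD n])
    (hy : y ≡ 0 [ZMOD n]) (t c : ℤ) : x * t + y * c ≡ t [ZMOD n] := by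
  calc x * t + y * c ≡ 1 * t + 0 * c [ZMOD n] := (hx.mul_right t).add (hy.mul_right c)
    _ = t := by ring

theorem pell_transformation_general (a l D t₀ m₀ r s : ℤ)
    (h₀ : t₀ ^ 2 = 4 * a * l * m₀ ^ 2 + D)
    (hrs : r ^ 2 - 16 * a ^ 3 * l * s ^ 2 = 1) :
    (r ^ 2 * t₀ + 16 * a ^ 2 * l * s * r * m₀ + 16 * a ^ 3 * s ^ 2 * l * t₀) ^ 2 =
        4 * a * l * (r ^ 2 * m₀ + 16 * a ^ 3 * l * s ^ 2 * m₀ + 4 * a * r * s * t₀) ^ 2 + D ∧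
      r ^ 2 * m₀ + 16 * a ^ 3 * l * s ^ 2 * m₀ + 4 * a * r * s * t₀ ≡ m₀ [ZMOD (2 * a)] ∧
      r ^ 2 * t₀ + 16 * a ^ 2 * l * s * r * m₀ + 16 * a ^ 3 * s ^ 2 * l * t₀ ≡ t₀ [ZMOD (2 * a)] := by
  have hu : r ^ 2 - 4 * a * l * (2 * a * s) ^ 2 = 1 := by linear_combination hrs
  have h₀' : t₀ ^ 2 - 4 * a * l * m₀ ^ 2 = D := by linear_combination h₀
  have hnorm := sq_sub_mul_sq_of_norm_eq_one h₀' (sq_sub_mul_sq_eq_one_sq hu)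
  have hx : r ^ 2 + 4 * a * l * (2 * a * s) ^ 2 ≡ 1 [ZMOD (2 * a)] := by
    have : r ^ 2 + 4 * a * l * (2 * a * s) ^ 2 = 1 + 2 * a * (16 * a ^ 2 * l * s ^ 2) := by
      linear_combination hrs
    rw [this]
    exact Int.add_mul_emod_self_left 1 (2 * a) _
  have hy : 2 * r * (2 * a * s) ≡ 0 [ZMOD (2 * a)] :=
    Int.modEq_zero_iff_dvd.mpr ⟨2 * r * s, by ring⟩
  refine ⟨by linear_combination hnorm, ?_, ?_⟩
  · convert Int.mul_add_mul_modEq_of_modEq_one hx hy m₀ t₀ using 1; ring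
  · convert Int.mul_add_mul_modEq_of_modEq_one hx hy t₀ (4 * a * l * m₀) using 1; ring

/-- The explicit Pell transformation producing new solutions of `t² = 4·a·l·m² + D`
from an old one, preserving congruences mod `2a`. -/
theorem pell_transformation (a l D t₀ m₀ r s : ℤ) (ha : 0 < a) (hl : 0 < l)
    (h₀ : t₀ ^ 2 = 4 * a * l * m₀ ^ 2 + D)
    (hrs : r ^ 2 - 16 * a ^ 3 * l * s ^ 2 = 1) :
    (r ^ 2 * t₀ + 16 * a ^ 2 * l * s * r * m₀ + 16 * a ^ 3 * s ^ 2 * l * t₀) ^ 2 =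
        4 * a * l * (r ^ 2 * m₀ + 16 * a ^ 3 * l * s ^ 2 * m₀ + 4 * a * r * s * t₀) ^ 2 + D ∧
      r ^ 2 * m₀ + 16 * a ^ 3 * l * s ^ 2 * m₀ + 4 * a * r * s * t₀ ≡ m₀ [ZMOD (2 * a)] ∧
      r ^ 2 * t₀ + 16 * a ^ 2 * l * s * r * m₀ + 16 * a ^ 3 * s ^ 2 * l * t₀ ≡ t₀ [ZMOD (2 * a)] :=
  pell_transformation_general a l D t₀ m₀ r s h₀ hrs
end

section
/- Let f(x) = a·x² + b·x + c with a > 0, D = b² - 4ac ≠ 0, and A₀ = ⌊(|b| + (|D|+1)/2)/(2a)⌋ + 1. Then for every integer n ≥ A₀, writing f(n) = l·m² with l positive, the product a·l is never a perfect square. -/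
/-- If `t² ≠ s²` then `2|t| ≤ |t² - s²| + 1`. -/
lemma two_abs_le_of_sq_ne (t s : ℤ) (h : t ^ 2 ≠ s ^ 2) :
    2 * |t| ≤ |t ^ 2 - s ^ 2| + 1 := by
  have hu : |t| ^ 2 = t ^ 2 := sq_abs t
  have hv : |s| ^ 2 = s ^ 2 := sq_abs s
  have hu0 : 0 ≤ |t| := abs_nonneg t
  have hv0 : 0 ≤ |s| := abs_nonneg s
  have habs : |t ^ 2 - s ^ 2| = |(|t| - |s|)| * (|t| + |s|) := by
    rw [← hu, ← hv, sq_sub_sq, abs_mul, abs_of_nonneg (by linarith : (0:ℤ) ≤ |t| + |s|)]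
    ring
  rcases lt_trichotomy (|t|) (|s|) with hlt | heq | hgt
  · have h1 : |(|t| - |s|)| = |s| - |t| := by
      rw [abs_of_neg (by linarith)]; ring
    rw [habs, h1]
    nlinarith
  · exact absurd (by rw [← hu, ← hv, heq]) h
  · have h1 : |(|t| - |s|)| = |t| - |s| := abs_of_pos (by linarith)
    rw [habs, h1]
    nlinarith [mul_nonneg (by linarith : (0:ℤ) ≤ |t| - |s| - 1)
      (by linarith : (0:ℤ) ≤ |t| + |s| - 1)]

/-- For `n ≥ A₀`, in any representation `f(n) = l·m²` with `l > 0`, the product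
`a·l` is never a perfect square. -/
theorem al_not_square_of_large (a b c : ℤ) (ha : 0 < a)
    (hD : b ^ 2 - 4 * a * c ≠ 0)
    (A₀ : ℤ) (hA₀ : A₀ = (|b| + (|b ^ 2 - 4 * a * c| + 1) / 2) / (2 * a) + 1)
    (n l m : ℤ) (hn : A₀ ≤ n) (hl : 0 < l)
    (hf : a * n ^ 2 + b * n + c = l * m ^ 2) :
    ¬ IsSquare (a * l) := by
  rintro ⟨N, hN⟩
  set D := b ^ 2 - 4 * a * c with hDdef
  set t := 2 * a * n + b with ht
  set s := 2 * N * m with hs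
  have hident : t ^ 2 - s ^ 2 = D := by
    have : 4 * a * (a * n ^ 2 + b * n + c) = 4 * (a * l) * m ^ 2 := by
      rw [hf]; ring
    rw [hN] at this
    simp only [ht, hs, hDdef]
    nlinarith [this]
  have hne : t ^ 2 ≠ s ^ 2 := by
    intro h
    apply hD
    rw [← hident, h]; ring
  have hkey : 2 * |t| ≤ |D| + 1 := by
    have := two_abs_le_of_sq_ne t s hne
    rwa [hident] at this
  -- bound on t from abs: t ≤ (|D|+1)/2
  set e : ℤ := |D| + 1 with he
  have he2 : e = 2 * (e / 2) + e % 2 := (Int.mul_ediv_add_emod e 2).symm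
  have hr2 : 0 ≤ e % 2 := Int.emod_nonneg e (by norm_num)
  have hr2' : e % 2 < 2 := Int.emod_lt_of_pos e (by norm_num)
  have htle : t ≤ e / 2 := by
    have h1 : t ≤ |t| := le_abs_self t
    omega
  -- lower bound on t from n ≥ A₀
  set x : ℤ := |b| + e / 2 with hx
  have h2a : (0:ℤ) < 2 * a := by linarith
  have hxdm : x = 2 * a * (x / (2 * a)) + x % (2 * a) := (Int.mul_ediv_add_emod x (2 * a)).symm
  have hxr : 0 ≤ x % (2 * a) := Int.emod_nonneg x (by linarith)
  have hxr' : x % (2 * a) < 2 * a := Int.emod_lt_of_pos x h2a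
  have hnge : x / (2 * a) + 1 ≤ n := by rw [hA₀] at hn; exact hn
  have h2an : x + 1 ≤ 2 * a * n := by
    have : 2 * a * (x / (2 * a) + 1) ≤ 2 * a * n :=
      mul_le_mul_of_nonneg_left hnge (by linarith)
    nlinarith [this]
  have hb : -|b| ≤ b := neg_abs_le b
  have : e / 2 + 1 ≤ t := by
    simp only [ht]
    have : x + 1 ≤ 2 * a * n := h2an
    simp only [hx] at this
    linarith
  linarith
end

section
/- Let f(n) = n² + b·n + c with b, c ∈ ℤ. If the sequence {λ(f(n))}_{n≥1} is constant (where defined and positive), then λ(f(n)) = +1 for all n in that range. -/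
theorem liouville_mul_s11 {a b : ℕ} (ha : a ≠ 0) (hb : b ≠ 0) :
    liouville (a * b) = liouville a * liouville b := by
  rw [liouville, ArithmeticFunction.cardFactors_mul ha hb, pow_add]; rfl

theorem liouville_mul_self (a : ℕ) : liouville a * liouville a = 1 := by
  rw [liouville, ← pow_add]
  exact (Even.add_self _).neg_one_pow

theorem liouville_toNat_mul {x y : ℤ} (hx : 0 < x) (hy : 0 < y) :
    liouville (x * y).toNat = liouville x.toNat * liouville y.toNat := by
  rw [Int.toNat_mul hx.le hy.le, liouville_mul_s11 (by omega) (by omega)]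

theorem quadratic_eval_add_self {R : Type*} [CommRing R] (b c n : R) :
    (n ^ 2 + b * n + c + n) ^ 2 + b * (n ^ 2 + b * n + c + n) + c
      = (n ^ 2 + b * n + c) * ((n + 1) ^ 2 + b * (n + 1) + c) := by
  ring

/-- If `{λ(f(n))}_{n ≥ 1}` is constant for monic `f(n) = n² + b n + c` (with `f(n) > 0`
for `n ≥ 1`), then the constant value is `+1`. -/
theorem monic_quadratic_constant_is_one (b c : ℤ)
    (hpos : ∀ n : ℤ, 1 ≤ n → 0 < n ^ 2 + b * n + c)
    (hconst : ∀ n : ℤ, 1 ≤ n →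
        liouville (n ^ 2 + b * n + c).toNat = liouville ((1 : ℤ) ^ 2 + b * 1 + c).toNat) :
    ∀ n : ℤ, 1 ≤ n → liouville (n ^ 2 + b * n + c).toNat = 1 := by
  set ε := liouville ((1 : ℤ) ^ 2 + b * 1 + c).toNat
  have hf1 := hpos 1 le_rfl
  have hf2 := hpos 2 (by norm_num)
  have hε : ε * ε = ε := by
    have h := hconst _ (by linarith : (1 : ℤ) ≤ 1 ^ 2 + b * 1 + c + 1)
    rwa [quadratic_eval_add_self, one_add_one_eq_two, liouville_toNat_mul hf1 hf2,
      hconst 2 (by norm_num)] at h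
  intro n hn
  rw [hconst n hn, ← hε, liouville_mul_self]
end
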